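/- arXiv:2402.04435 — 3 statements merged into one kernel-verified Lean document; each statement's English description precedes it below -/
import Mathlib

section
/- Let E be a real normed vector space, let c ≥ 2, and let f_C : E → EuclideanSpace ℝ (Fin c) be a downstream classifier that is Lipschitz with constant L ≥ 0 (for all x₁, x₂ ∈ E, ‖f_C(x₁) − f_C(x₂)‖₂ ≤ L‖x₁ − x₂‖). Let h_a, h_b ∈ E be the embeddings of two watermark graphs, set y_a = f_C(h_a) and y_b = f_C(h_b), let c₁ : Fin c be a coordinate with y_a c₁ ≥ y_a i for all i, and let s_a = y_a c₁ − max_{i ≠ c₁} y_a i be the margin between the logit of the predicted class and that of the second most confident class on y_a. If 2 · L · ‖h_a − h_b‖ < s_a, then y_b c₁ > y_b i for every i ≠ c₁; that is, the predicted class of f_C on h_b is guaranteed to be the same as that on h_a. -/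
/-! Each coordinate of a vector in `ℓᵖ` moves by at most the distance, so a Lipschitz
classifier moves every logit by at most `L‖hₐ - h_b‖`. A gap of more than twice that between
the top logit and every other logit therefore cannot be closed. -/

theorem PiLp.apply_lt_apply_of_two_mul_dist_lt {p : ENNReal} [Fact (1 ≤ p)] {ι : Type*}
    [Fintype ι] {y z : PiLp p (fun _ : ι => ℝ)} {i j : ι} (h : 2 * dist y z < y j - y i) :
    z i < z j := by
  have hi := abs_le.mp (Real.dist_eq _ _ ▸ PiLp.dist_apply_le y z i)
  have hj := abs_le.mp (Real.dist_eq _ _ ▸ PiLp.dist_apply_le y z j)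
  linarith [hi.2, hj.1]

theorem lipschitz_classifier_same_prediction_general {E : Type*}
    [NormedAddCommGroup E] {c : ℕ}
    (fC : E → EuclideanSpace ℝ (Fin c)) (L : ℝ)
    (hlip : ∀ x₁ x₂ : E, ‖fC x₁ - fC x₂‖ ≤ L * ‖x₁ - x₂‖)
    (ha hb : E)
    (ya yb : EuclideanSpace ℝ (Fin c))
    (hya : ya = fC ha) (hyb : yb = fC hb)
    (c₁ : Fin c)
    (hne : ((Finset.univ : Finset (Fin c)).erase c₁).Nonempty)
    (sa : ℝ)
    (hsa : sa = ya c₁ - ((Finset.univ : Finset (Fin c)).erase c₁).sup' hne ya)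
    (hcond : 2 * L * ‖ha - hb‖ < sa) :
    ∀ i, i ≠ c₁ → yb i < yb c₁ := by
  intro i hi
  have hgap : sa ≤ ya c₁ - ya i := by
    rw [hsa]
    linarith [Finset.le_sup' ya (Finset.mem_erase.mpr ⟨hi, Finset.mem_univ i⟩)]
  have hclose : dist ya yb ≤ L * ‖ha - hb‖ := by
    rw [dist_eq_norm, hya, hyb]
    exact hlip ha hb
  exact PiLp.apply_lt_apply_of_two_mul_dist_lt (by linarith)

/-- Lipschitz-classifier margin step (core of Theorem 1): if the `L`-Lipschitz
classifier `fC` has margin `sa` at its predicted class `c₁` on the embedding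
`ha`, and `2 * L * ‖ha - hb‖ < sa`, then `fC` predicts the same class on `hb`. -/
theorem lipschitz_classifier_same_prediction {E : Type*}
    [NormedAddCommGroup E] [NormedSpace ℝ E] {c : ℕ} (hc : 2 ≤ c)
    (fC : E → EuclideanSpace ℝ (Fin c)) (L : ℝ) (hL : 0 ≤ L)
    (hlip : ∀ x₁ x₂ : E, ‖fC x₁ - fC x₂‖ ≤ L * ‖x₁ - x₂‖)
    (ha hb : E)
    (ya yb : EuclideanSpace ℝ (Fin c))
    (hya : ya = fC ha) (hyb : yb = fC hb)
    (c₁ : Fin c)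
    (hmax : ∀ i, ya i ≤ ya c₁)
    (hne : ((Finset.univ : Finset (Fin c)).erase c₁).Nonempty)
    (sa : ℝ)
    (hsa : sa = ya c₁ - ((Finset.univ : Finset (Fin c)).erase c₁).sup' hne ya)
    (hcond : 2 * L * ‖ha - hb‖ < sa) :
    ∀ i, i ≠ c₁ → yb i < yb c₁ :=
  lipschitz_classifier_same_prediction_general fC L hlip ha hb ya yb hya hyb c₁ hne sa hsa hcond
end

section
/- Let K ≥ 1, let E₀, E₁, …, E_{K−1} be real normed vector spaces with E_K = EuclideanSpace ℝ (Fin c) for some c ≥ 2, and for each i ∈ {0, …, K−1} let W_i : E_i →L[ℝ] E_{i+1} be a continuous linear map and φ_i : E_{i+1} → E_{i+1} a 1-Lipschitz activation. Let f_C = φ_{K−1} ∘ W_{K−1} ∘ ⋯ ∘ φ_0 ∘ W_0 : E₀ → EuclideanSpace ℝ (Fin c) be the resulting K-layer MLP classifier. Let h_a, h_b ∈ E₀, set y_a = f_C(h_a) and y_b = f_C(h_b), let c₁ : Fin c satisfy y_a c₁ ≥ y_a i for all i, and let s_a = y_a c₁ − max_{i ≠ c₁} y_a i be the margin between the logit of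 the predicted class and that of the second most confident class on h_a. If ‖h_a − h_b‖ < (1/2) · s_a / ∏_{i=0}^{K−1} ‖W_i‖ (with each operator norm ‖W_i‖ > 0), then y_b c₁ > y_b i for every i ≠ c₁; that is, the predicted class of f_C on h_b is guaranteed to be the same as that on h_a. -/
/-! Each layer `φ i ∘ W i` is `‖W i‖`-Lipschitz, so the network moves the logits by at most
`∏ ‖W i‖ · ‖ha - hb‖ < sa / 2`. Every coordinate then moves by less than `sa / 2`, which
cannot close a gap of at least `sa` between the top logit and any other. -/

/-- The `K`-layer network `φ_{K-1} ∘ W_{K-1} ∘ ⋯ ∘ φ_0 ∘ W_0 : E 0 → E K`. -/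
def mlpNet (E : ℕ → Type*) [∀ i, NormedAddCommGroup (E i)] [∀ i, NormedSpace ℝ (E i)]
    (W : ∀ i, E i →L[ℝ] E (i + 1)) (φ : ∀ i, E (i + 1) → E (i + 1)) :
    ∀ K, E 0 → E K
  | 0 => id
  | (K + 1) => φ K ∘ (W K) ∘ mlpNet E W φ K

open Finset

theorem mlpNet_lipschitzWith (E : ℕ → Type*) [∀ i, NormedAddCommGroup (E i)]
    [∀ i, NormedSpace ℝ (E i)] (W : ∀ i, E i →L[ℝ] E (i + 1))
    {φ : ∀ i, E (i + 1) → E (i + 1)} (hφ : ∀ i, LipschitzWith 1 (φ i)) (K : ℕ) :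
    LipschitzWith (∏ i ∈ range K, ‖W i‖₊) (mlpNet E W φ K) := by
  induction K with
  | zero => simpa [mlpNet] using LipschitzWith.id
  | succ K ih =>
    rw [prod_range_succ, mul_comm, ← one_mul (_ * _)]
    exact (hφ K).comp ((W K).lipschitz.comp ih)

theorem PiLp.apply_lt_apply_of_dist_lt_half {ι : Type*} [Fintype ι] {p : ENNReal}
    [Fact (1 ≤ p)] {x y : PiLp p (fun _ : ι => ℝ)} {i j : ι} {s : ℝ}
    (hgap : x i + s ≤ x j) (hxy : dist x y < s / 2) : y i < y j := by
  have hi := abs_lt.1 ((PiLp.dist_apply_le x y i).trans_lt hxy)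
  have hj := abs_lt.1 ((PiLp.dist_apply_le x y j).trans_lt hxy)
  linarith [hi.1, hi.2, hj.1, hj.2]

/-- Since `b / 0 = 0`, the hypothesis `a < b / c` already fails when `c = 0`. -/
theorem mul_lt_of_lt_div_of_nonneg {a b c : ℝ} (ha : 0 ≤ a) (hc : 0 ≤ c) (h : a < b / c) :
    c * a < b := by
  rcases hc.eq_or_lt with rfl | hc
  · rw [div_zero] at h
    exact absurd h ha.not_gt
  · rwa [lt_div_iff₀' hc] at h

theorem mlp_classifier_same_prediction_general (E : ℕ → Type*)
    [∀ i, NormedAddCommGroup (E i)] [∀ i, NormedSpace ℝ (E i)]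
    (K : ℕ)
    (W : ∀ i, E i →L[ℝ] E (i + 1)) (φ : ∀ i, E (i + 1) → E (i + 1))
    (hφ : ∀ i, LipschitzWith 1 (φ i))
    {c : ℕ}
    (e : E K ≃ₗᵢ[ℝ] EuclideanSpace ℝ (Fin c))
    (ha hb : E 0)
    (ya yb : EuclideanSpace ℝ (Fin c))
    (hya : ya = e (mlpNet E W φ K ha)) (hyb : yb = e (mlpNet E W φ K hb))
    (c₁ : Fin c)
    (hne : ((Finset.univ : Finset (Fin c)).erase c₁).Nonempty)
    (sa : ℝ)
    (hsa : sa = ya c₁ - ((Finset.univ : Finset (Fin c)).erase c₁).sup' hne ya)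
    (hcond : ‖ha - hb‖ < (1 / 2) * sa / ∏ i ∈ Finset.range K, ‖W i‖) :
    ∀ i, i ≠ c₁ → yb i < yb c₁ := by
  intro i hi
  have hlip : dist ya yb ≤ (∏ i ∈ range K, ‖W i‖) * dist ha hb := by
    rw [hya, hyb, e.dist_map]
    simpa using (mlpNet_lipschitzWith E W hφ K).dist_le_mul ha hb
  have hclose : (∏ i ∈ range K, ‖W i‖) * dist ha hb < sa / 2 := by
    rw [dist_eq_norm, div_eq_mul_one_div sa, mul_comm sa]
    exact mul_lt_of_lt_div_of_nonneg (norm_nonneg _)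
      (prod_nonneg fun _ _ => norm_nonneg _) hcond
  have hgap : ya i + sa ≤ ya c₁ := by
    have := le_sup' ya (mem_erase.2 ⟨hi, mem_univ i⟩)
    linarith
  exact PiLp.apply_lt_apply_of_dist_lt_half hgap (hlip.trans_lt hclose)

/-- Theorem 1 of the paper: a `K`-layer MLP classifier (continuous linear layers
`W i`, `1`-Lipschitz activations `φ i`, output space `E K` identified with the
logit space `EuclideanSpace ℝ (Fin c)` via a linear isometry `e`) predicts the
same class on `hb` as on `ha` whenever
`‖ha - hb‖ < (1/2) * sa / ∏_{i<K} ‖W i‖`, where `sa` is the margin between the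
top logit and the second-largest logit on `ha`. -/
theorem mlp_classifier_same_prediction (E : ℕ → Type*)
    [∀ i, NormedAddCommGroup (E i)] [∀ i, NormedSpace ℝ (E i)]
    (K : ℕ) (hK : 1 ≤ K)
    (W : ∀ i, E i →L[ℝ] E (i + 1)) (φ : ∀ i, E (i + 1) → E (i + 1))
    (hφ : ∀ i, LipschitzWith 1 (φ i))
    {c : ℕ} (hc : 2 ≤ c)
    (e : E K ≃ₗᵢ[ℝ] EuclideanSpace ℝ (Fin c))
    (ha hb : E 0)
    (ya yb : EuclideanSpace ℝ (Fin c))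
    (hya : ya = e (mlpNet E W φ K ha)) (hyb : yb = e (mlpNet E W φ K hb))
    (c₁ : Fin c)
    (hmax : ∀ i, ya i ≤ ya c₁)
    (hne : ((Finset.univ : Finset (Fin c)).erase c₁).Nonempty)
    (sa : ℝ)
    (hsa : sa = ya c₁ - ((Finset.univ : Finset (Fin c)).erase c₁).sup' hne ya)
    (hWpos : ∀ i < K, 0 < ‖W i‖)
    (hcond : ‖ha - hb‖ < (1 / 2) * sa / ∏ i ∈ Finset.range K, ‖W i‖) :
    ∀ i, i ≠ c₁ → yb i < yb c₁ :=
  mlp_classifier_same_prediction_general E K W φ hφ e ha hb ya yb hya hyb c₁ hne sa hsa hcond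
end

section
/- Let Θ and E be real normed vector spaces (the parameter space and embedding space), let c ≥ 2, and let f_C : E → EuclideanSpace ℝ (Fin c) be Lipschitz with constant L > 0. Let g_a, g_b : Θ → E be the maps sending encoder parameters to the embeddings of the two watermark graphs 𝒢_w^a and 𝒢_w^b. Let θ, θ̂ ∈ Θ and ε ≥ 0 with ‖θ̂ − θ‖ ≤ ε (the finetuned parameters lie within a spherical radius ε of the pretrained parameters). Set y_a = f_C(g_a(θ̂)) and y_b = f_C(g_b(θ̂)), let c₁ : Fin c satisfy y_a c₁ ≥ y_a i for all i, let s_a = y_a c₁ − max_{i ≠ c₁} y_a i, and suppose s_a ≥ s̲_a for some s̲_a > 0. If for every δ ∈ Θ with ‖δ‖ ≤ ε one has ‖g_a(θ + δ) − g_b(θ + δ)‖ < (1/2) · s̲_a / L, then y_b c₁ > y_b i for every i ≠ c₁; that is, the finetuned classifier's predicted class on 𝒢_w^b is guaranteed to be the same as that on 𝒢_w^a. -/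
/-! A finetuned parameter `θ̂` is of the form `θ + δ` with `‖δ‖ ≤ ε`, so the two watermark
embeddings under `θ̂` are closer than `s̲ₐ / (2L)`, and the `L`-Lipschitz classifier maps them to
logit vectors closer than `s̲ₐ / 2 ≤ sₐ / 2`. Every coordinate then moves by less than half the
margin, so no other class can overtake `c₁`. -/

theorem norm_map_sub_lt_of_norm_sub_lt_div {E F : Type*} [SeminormedAddCommGroup E]
    [SeminormedAddCommGroup F] {f : E → F} {L r : ℝ} (hL : 0 < L)
    (hlip : ∀ x₁ x₂ : E, ‖f x₁ - f x₂‖ ≤ L * ‖x₁ - x₂‖) {x₁ x₂ : E}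
    (h : ‖x₁ - x₂‖ < r / L) : ‖f x₁ - f x₂‖ < r :=
  calc ‖f x₁ - f x₂‖ ≤ L * ‖x₁ - x₂‖ := hlip x₁ x₂
    _ < L * (r / L) := by gcongr
    _ = r := mul_div_cancel₀ r hL.ne'

theorem PiLp.apply_lt_apply_of_norm_sub_lt_half {ι : Type*} [Fintype ι] {p : ENNReal}
    [Fact (1 ≤ p)] {y z : PiLp p (fun _ : ι => ℝ)} {i j : ι} {s : ℝ}
    (hmargin : y i + s ≤ y j) (hclose : ‖y - z‖ < s / 2) : z i < z j := by
  have hi := abs_lt.1 ((PiLp.norm_apply_le (y - z) i).trans_lt hclose)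
  have hj := abs_lt.1 ((PiLp.norm_apply_le (y - z) j).trans_lt hclose)
  simp only [PiLp.sub_apply] at hi hj
  linarith

theorem finetuned_classifier_same_prediction_general {Θ E : Type*}
    [NormedAddCommGroup Θ] [NormedSpace ℝ Θ]
    [NormedAddCommGroup E] [NormedSpace ℝ E]
    {c : ℕ}
    (fC : E → EuclideanSpace ℝ (Fin c)) (L : ℝ) (hL : 0 < L)
    (hlip : ∀ x₁ x₂ : E, ‖fC x₁ - fC x₂‖ ≤ L * ‖x₁ - x₂‖)
    (ga gb : Θ → E)
    (θ θhat : Θ) (ε : ℝ) (hθ : ‖θhat - θ‖ ≤ ε)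
    (ya yb : EuclideanSpace ℝ (Fin c))
    (hya : ya = fC (ga θhat)) (hyb : yb = fC (gb θhat))
    (c₁ : Fin c)
    (hne : ((Finset.univ : Finset (Fin c)).erase c₁).Nonempty)
    (sa : ℝ)
    (hsa : sa = ya c₁ - ((Finset.univ : Finset (Fin c)).erase c₁).sup' hne ya)
    (saLow : ℝ) (hlow : saLow ≤ sa)
    (hcond : ∀ δ : Θ, ‖δ‖ ≤ ε → ‖ga (θ + δ) - gb (θ + δ)‖ < (1 / 2) * saLow / L) :
    ∀ i, i ≠ c₁ → yb i < yb c₁ := by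
  intro i hi
  have hemb : ‖ga θhat - gb θhat‖ < (1 / 2) * saLow / L := by
    simpa only [add_sub_cancel] using hcond (θhat - θ) hθ
  have hlogits : ‖ya - yb‖ < sa / 2 := by
    rw [hya, hyb]
    linarith [norm_map_sub_lt_of_norm_sub_lt_div hL hlip hemb]
  have hmargin : ya i + sa ≤ ya c₁ := by
    have := Finset.le_sup' ya (Finset.mem_erase.2 ⟨hi, Finset.mem_univ i⟩)
    linarith
  exact PiLp.apply_lt_apply_of_norm_sub_lt_half hmargin hlogits

/-- Corollary 2 of the paper: finetuning-resistant watermark consistency.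
If the finetuned parameters `θ̂` stay within radius `ε` of `θ`, the classifier
`fC` is `L`-Lipschitz, the margin `sa` of the prediction on the embedding of
`𝒢_w^a` is at least `s̲ₐ > 0`, and the embeddings of the watermark pair stay
within distance `(1/2) * s̲ₐ / L` uniformly over the `ε`-ball of parameter
updates, then the finetuned classifier predicts the same class on both
watermark graphs. -/
theorem finetuned_classifier_same_prediction {Θ E : Type*}
    [NormedAddCommGroup Θ] [NormedSpace ℝ Θ]
    [NormedAddCommGroup E] [NormedSpace ℝ E]
    {c : ℕ} (hc : 2 ≤ c)
    (fC : E → EuclideanSpace ℝ (Fin c)) (L : ℝ) (hL : 0 < L)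
    (hlip : ∀ x₁ x₂ : E, ‖fC x₁ - fC x₂‖ ≤ L * ‖x₁ - x₂‖)
    (ga gb : Θ → E)
    (θ θhat : Θ) (ε : ℝ) (hε : 0 ≤ ε) (hθ : ‖θhat - θ‖ ≤ ε)
    (ya yb : EuclideanSpace ℝ (Fin c))
    (hya : ya = fC (ga θhat)) (hyb : yb = fC (gb θhat))
    (c₁ : Fin c)
    (hmax : ∀ i, ya i ≤ ya c₁)
    (hne : ((Finset.univ : Finset (Fin c)).erase c₁).Nonempty)
    (sa : ℝ)
    (hsa : sa = ya c₁ - ((Finset.univ : Finset (Fin c)).erase c₁).sup' hne ya)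
    (saLow : ℝ) (hsaLow : 0 < saLow) (hlow : saLow ≤ sa)
    (hcond : ∀ δ : Θ, ‖δ‖ ≤ ε → ‖ga (θ + δ) - gb (θ + δ)‖ < (1 / 2) * saLow / L) :
    ∀ i, i ≠ c₁ → yb i < yb c₁ :=
  finetuned_classifier_same_prediction_general fC L hL hlip ga gb θ θhat ε hθ ya yb hya hyb c₁ hne
    sa hsa saLow hlow hcond
end
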